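/- Let A be a commutative von Neumann regular ring and define the Loewy series s_α A transfinitely by s_0 A = 0, s_{α+1}A/s_α A = socle of A/s_α A, and s_λ A = ⋃_{α<λ} s_α A at limit ordinals. Then for every ordinal α, Spec(A/s_α A) is homeomorphic to δ^α Spec(A), the α-th Cantor–Bendixson derivative of Spec(A). -/

import Mathlib

open Ordinal

/-- The socle of a commutative ring: the sum of all simple ideals. -/
def socleIdeal (A : Type*) [CommRing A] : Ideal A :=
  sSup {I : Ideal A | IsSimpleModule A I}

/-- The Loewy series of a commutative ring: `loewy A 0 = ⊥`,
`loewy A (α+1)` is the preimage of the socle of `A ⧸ loewy A α`, and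
unions are taken at limit ordinals. -/
noncomputable def loewy (A : Type*) [CommRing A] : Ordinal.{0} → Ideal A :=
  fun o => Ordinal.limitRecOn o ⊥
    (fun _ s => Ideal.comap (Ideal.Quotient.mk s) (socleIdeal (A ⧸ s)))
    (fun o _ ih => ⨆ (b : Ordinal) (h : b < o), ih b h)

/-- A ring is semi-artinian if its Loewy series reaches the whole ring. -/
def IsSemiArtinian (A : Type*) [CommRing A] : Prop :=
  ∃ α : Ordinal.{0}, loewy A α = ⊤

/-- The Cantor–Bendixson derivative of a subset: the set of its
non-isolated points in the subspace topology. -/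
def derivSet {X : Type*} [TopologicalSpace X] (s : Set X) : Set X :=
  {x ∈ s | ∀ U : Set X, IsOpen U → x ∈ U → ¬ (U ∩ s ⊆ {x})}

/-- Iterated Cantor–Bendixson derivatives of a topological space. -/
noncomputable def cbDeriv (X : Type*) [TopologicalSpace X] : Ordinal.{0} → Set X :=
  fun o => Ordinal.limitRecOn o Set.univ
    (fun _ s => derivSet s)
    (fun o _ ih => ⋂ (b : Ordinal) (h : b < o), ih b h)

/-!
In a von Neumann regular ring every ideal is radical and every prime is maximal, so `V` is an
order-reversing bijection from ideals onto closed subsets of `Spec`, under which the minimal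
nonzero ideals correspond to the isolated points; hence a prime contains the socle exactly when
it is not isolated. Quotients are again regular and `Spec (A ⧸ I)` is the closed subspace `V(I)`,
so this says `V(s_{α+1} A)` is the derived set of `V(s_α A)`, while `V` turns the unions at limit
stages into intersections. Transfinite induction gives `V(s_α A) = δ^α Spec A`.
-/

open PrimeSpectrum

def IsVonNeumannRegular (B : Type*) [Mul B] : Prop :=
  ∀ a : B, ∃ x, a * x * a = a

namespace IsVonNeumannRegular

variable {B : Type*} [CommRing B]

lemma quotient (hB : IsVonNeumannRegular B) (I : Ideal B) : IsVonNeumannRegular (B ⧸ I) := by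
  intro a
  obtain ⟨b, rfl⟩ := Ideal.Quotient.mk_surjective a
  obtain ⟨x, hx⟩ := hB b
  exact ⟨Ideal.Quotient.mk I x, by rw [← map_mul, ← map_mul, hx]⟩

lemma eq_pow_succ_mul_pow {a x : B} (hx : a * x * a = a) (n : ℕ) :
    a = a ^ (n + 1) * x ^ n := by
  induction n with
  | zero => simp
  | succ n ih =>
    calc a = a * x * a := hx.symm
      _ = a * x * (a ^ (n + 1) * x ^ n) := by rw [← ih]
      _ = a ^ (n + 1 + 1) * x ^ (n + 1) := by ring

lemma isRadical (hB : IsVonNeumannRegular B) (I : Ideal B) : I.IsRadical := by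
  rintro a ⟨n, hn⟩
  obtain ⟨x, hx⟩ := hB a
  rw [eq_pow_succ_mul_pow hx n]
  exact I.mul_mem_right _ (I.pow_mem_of_pow_mem hn n.le_succ)

lemma isMaximal (hB : IsVonNeumannRegular B) (P : Ideal B) [hP : P.IsPrime] : P.IsMaximal := by
  refine Ideal.isMaximal_iff.mpr ⟨(Ideal.ne_top_iff_one P).mp hP.ne_top, fun J a hPJ haP haJ => ?_⟩
  obtain ⟨x, hx⟩ := hB a
  have hzero : a * (1 - x * a) ∈ P := by
    rw [show a * (1 - x * a) = 0 by linear_combination -hx]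
    exact P.zero_mem
  have h1 : 1 - x * a ∈ J := hPJ ((hP.mem_or_mem hzero).resolve_left haP)
  simpa using J.add_mem h1 (J.mul_mem_left x haJ)

lemma zeroLocus_subset_zeroLocus_iff (hB : IsVonNeumannRegular B) (I J : Ideal B) :
    zeroLocus (I : Set B) ⊆ zeroLocus J ↔ J ≤ I := by
  rw [PrimeSpectrum.zeroLocus_subset_zeroLocus_iff, (hB.isRadical I).radical]

lemma compl_zeroLocus_eq_singleton_of_isAtom (hB : IsVonNeumannRegular B) {I : Ideal B}
    (hI : IsAtom I) {P : PrimeSpectrum B} (hIP : ¬ I ≤ P.asIdeal) :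
    (zeroLocus (I : Set B))ᶜ = {P} := by
  ext Q
  simp only [Set.mem_compl_iff, mem_zeroLocus, SetLike.coe_subset_coe, Set.mem_singleton_iff]
  refine ⟨fun hIQ => ?_, fun h => h ▸ hIP⟩
  have hinf : I ⊓ Q.asIdeal = ⊥ :=
    hI.2 _ (inf_le_left.lt_of_ne fun h => hIQ (h ▸ inf_le_right))
  have hQP : Q.asIdeal ≤ P.asIdeal :=
    (P.isPrime.inf_le.mp (hinf ▸ bot_le)).resolve_left hIP
  exact PrimeSpectrum.ext ((hB.isMaximal Q.asIdeal).eq_of_le P.isPrime.ne_top hQP)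

lemma isAtom_vanishingIdeal_compl_singleton (hB : IsVonNeumannRegular B) {P : PrimeSpectrum B}
    (hP : IsOpen ({P} : Set (PrimeSpectrum B))) :
    IsAtom (vanishingIdeal {P}ᶜ) ∧ ¬ vanishingIdeal {P}ᶜ ≤ P.asIdeal := by
  set I := vanishingIdeal ({P}ᶜ : Set (PrimeSpectrum B))
  have hZ : zeroLocus (I : Set B) = {P}ᶜ := by
    rw [zeroLocus_vanishingIdeal_eq_closure, hP.isClosed_compl.closure_eq]
  have hIP : ¬ I ≤ P.asIdeal := by
    rw [← SetLike.coe_subset_coe, ← mem_zeroLocus, hZ]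
    exact fun h => h rfl
  refine ⟨⟨fun h => hIP (h ▸ bot_le), fun J hJI => ?_⟩, hIP⟩
  have hPJ : P ∈ zeroLocus (J : Set B) := by
    by_contra hPJ
    refine hJI.not_ge ((hB.zeroLocus_subset_zeroLocus_iff J I).mp ?_)
    rw [hZ]
    exact fun Q hQ hQP => hPJ (hQP ▸ hQ)
  rw [← le_bot_iff, ← hB.zeroLocus_subset_zeroLocus_iff, zeroLocus_bot]
  intro Q _
  by_cases hQP : Q = P
  · exact hQP ▸ hPJ
  · exact zeroLocus_anti_mono (SetLike.coe_subset_coe.mpr hJI.le) (hZ ▸ hQP)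

lemma socleIdeal_le_iff (hB : IsVonNeumannRegular B) (P : PrimeSpectrum B) :
    socleIdeal B ≤ P.asIdeal ↔ ¬ IsOpen ({P} : Set (PrimeSpectrum B)) := by
  refine ⟨fun hle hP => ?_, fun hP => ?_⟩
  · obtain ⟨hatom, hnle⟩ := hB.isAtom_vanishingIdeal_compl_singleton hP
    exact hnle ((le_sSup (s := {I : Ideal B | IsSimpleModule B I})
      (isSimpleModule_iff_isAtom.mpr hatom)).trans hle)
  · by_contra hle
    rw [socleIdeal, sSup_le_iff] at hle
    obtain ⟨I, hI, hIP⟩ := not_forall₂.mp hle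
    rw [← hB.compl_zeroLocus_eq_singleton_of_isAtom (isSimpleModule_iff_isAtom.mp hI) hIP] at hP
    exact hP (isClosed_zeroLocus _).isOpen_compl

end IsVonNeumannRegular

lemma Topology.IsEmbedding.derivSet_range {X Y : Type*} [TopologicalSpace X]
    [TopologicalSpace Y] {f : Y → X} (hf : IsEmbedding f) :
    derivSet (Set.range f) = f '' {y | ¬ IsOpen ({y} : Set Y)} := by
  ext x
  constructor
  · rintro ⟨⟨y, rfl⟩, h⟩
    refine ⟨y, fun hy => ?_, rfl⟩
    obtain ⟨U, hU, hUy⟩ := hf.isOpen_iff.mp hy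
    refine h U hU (show y ∈ f ⁻¹' U by rw [hUy]; rfl) ?_
    rintro _ ⟨hU', y', rfl⟩
    have : y' ∈ f ⁻¹' U := hU'
    rw [hUy] at this
    rw [this]
    rfl
  · rintro ⟨y, hy, rfl⟩
    refine ⟨Set.mem_range_self y, fun U hU hyU hsub => hy ?_⟩
    convert hU.preimage hf.continuous
    ext y'
    exact ⟨fun h => h ▸ hyU, fun h => hf.injective (hsub ⟨h, Set.mem_range_self y'⟩)⟩

lemma range_comap_quotient_mk {A : Type*} [CommRing A] (I : Ideal A) :
    Set.range (comap (Ideal.Quotient.mk I)) = zeroLocus (I : Set A) := by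
  rw [range_comap_of_surjective _ _ Ideal.Quotient.mk_surjective, Ideal.mk_ker]

lemma IsVonNeumannRegular.zeroLocus_comap_socleIdeal {A : Type*} [CommRing A]
    (hA : IsVonNeumannRegular A) (s : Ideal A) :
    zeroLocus (Ideal.comap (Ideal.Quotient.mk s) (socleIdeal (A ⧸ s)) : Set A) =
      derivSet (zeroLocus (s : Set A)) := by
  have hsurj : Function.Surjective (Ideal.Quotient.mk s) := Ideal.Quotient.mk_surjective
  rw [← image_comap_zeroLocus_eq_zeroLocus_comap _ _ hsurj, ← range_comap_quotient_mk s,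
    (isClosedEmbedding_comap_of_surjective _ _ hsurj).isEmbedding.derivSet_range]
  congr 1
  ext Q
  exact (hA.quotient s).socleIdeal_le_iff Q

section Unfolding

variable (A : Type*) [CommRing A] (X : Type*) [TopologicalSpace X]

lemma loewy_zero : loewy A 0 = ⊥ := limitRecOn_zero _ _ _

lemma loewy_add_one (α : Ordinal.{0}) :
    loewy A (α + 1) = Ideal.comap (Ideal.Quotient.mk (loewy A α)) (socleIdeal (A ⧸ loewy A α)) :=
  limitRecOn_add_one _ _ _ _

lemma loewy_of_isSuccLimit {α : Ordinal.{0}} (hα : Order.IsSuccLimit α) :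
    loewy A α = ⨆ (β : Ordinal) (_ : β < α), loewy A β :=
  limitRecOn_limit _ _ _ _ hα

lemma cbDeriv_zero : cbDeriv X 0 = Set.univ := limitRecOn_zero _ _ _

lemma cbDeriv_add_one (α : Ordinal.{0}) : cbDeriv X (α + 1) = derivSet (cbDeriv X α) :=
  limitRecOn_add_one _ _ _ _

lemma cbDeriv_of_isSuccLimit {α : Ordinal.{0}} (hα : Order.IsSuccLimit α) :
    cbDeriv X α = ⋂ (β : Ordinal) (_ : β < α), cbDeriv X β :=
  limitRecOn_limit _ _ _ _ hα

end Unfolding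

lemma IsVonNeumannRegular.zeroLocus_loewy {A : Type*} [CommRing A] (hA : IsVonNeumannRegular A)
    (α : Ordinal.{0}) : zeroLocus (loewy A α : Set A) = cbDeriv (PrimeSpectrum A) α := by
  induction α using Ordinal.limitRecOn with
  | zero => rw [loewy_zero, cbDeriv_zero, zeroLocus_bot]
  | add_one β ih => rw [loewy_add_one, cbDeriv_add_one, hA.zeroLocus_comap_socleIdeal, ih]
  | limit β hβ ih =>
    rw [loewy_of_isSuccLimit _ hβ, cbDeriv_of_isSuccLimit _ hβ]
    simp only [zeroLocus_iSup]
    exact Set.iInter₂_congr ih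

/-- For every ordinal `α`, `Spec (A ⧸ s_α A)` is homeomorphic to the `α`-th
Cantor–Bendixson derivative of `Spec A`. -/
theorem stmt9 (A : Type*) [CommRing A] (hA : ∀ a : A, ∃ x, a * x * a = a)
    (α : Ordinal.{0}) :
    Nonempty (PrimeSpectrum (A ⧸ loewy A α) ≃ₜ
      (cbDeriv (PrimeSpectrum A) α)) := by
  have hemb := (isClosedEmbedding_comap_of_surjective _ _
    (Ideal.Quotient.mk_surjective (I := loewy A α))).isEmbedding
  have hrange : Set.range (comap (Ideal.Quotient.mk (loewy A α))) = cbDeriv (PrimeSpectrum A) α :=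
    by rw [range_comap_quotient_mk, IsVonNeumannRegular.zeroLocus_loewy hA α]
  exact ⟨hemb.toHomeomorph.trans (Homeomorph.setCongr hrange)⟩
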